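/- arXiv:1008.2811 — 10 statements merged into one kernel-verified Lean document; each statement's English description precedes it below -/
import Mathlib

section
/- Let A be a unital C*-algebra and let J be a ℂ-linear subspace of A. The following are equivalent: (i) there exist a nonzero complex Hilbert space H and a unital completely positive linear map φ : A → B(H) whose kernel equals J; (ii) there exists a nonempty family of states of A such that the intersection of their kernels equals J. -/
open scoped ComplexOrder

/-- An element `M` of `Mₙ(A)` (for `A` a C*-algebra) is positive iff it factors as
`M = Nᴴ * N` for some `N ∈ Mₙ(A)`. -/
def IsPosMat {A : Type*} [Ring A] [StarRing A] {n : ℕ}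
    (M : Matrix (Fin n) (Fin n) A) : Prop :=
  ∃ N : Matrix (Fin n) (Fin n) A, M = N.conjTranspose * N

/-- A linear map between C*-algebras is completely positive if all entrywise induced
maps on matrix algebras preserve positivity. -/
def CompletelyPositive {A B : Type*} [Ring A] [StarRing A] [Module ℂ A]
    [Ring B] [StarRing B] [Module ℂ B] (φ : A →ₗ[ℂ] B) : Prop :=
  ∀ (n : ℕ) (M : Matrix (Fin n) (Fin n) A), IsPosMat M → IsPosMat (M.map φ)

/-!
(i) ⇒ (ii): the vector states `a ↦ ⟪v, φ a v⟫` at unit vectors `v` are states, positive because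
`φ (b⋆b) = N⋆N` by complete positivity at `n = 1`, and an operator `T` on a complex Hilbert space
with `⟪v, T v⟫ = 0` for all unit `v` vanishes by polarization.

(ii) ⇒ (i): a family of states `fᵢ` is uniformly bounded, so `a ↦ (fᵢ a)ᵢ` maps `A` into
`ℓ^∞(ι)`, which acts faithfully on `ℓ²(ι)` by diagonal operators. The map into `ℓ^∞(ι)` is
completely positive: coordinatewise, the scalar matrix `[fᵢ(Mⱼₖ)]` is positive semidefinite and
factors as `Rᵢᴴ Rᵢ`, and the entries of the `Rᵢ` are bounded uniformly in `i` by the diagonal of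
`[fᵢ(Mⱼₖ)]`, so the `Rᵢ` assemble into a matrix over `ℓ^∞(ι)`.
-/

open scoped Matrix ENNReal

lemma IsPosMat.map {R S F : Type*} [Ring R] [StarRing R] [Ring S] [StarRing S] [FunLike F R S]
    [RingHomClass F R S] [StarHomClass F R S] (ψ : F) {n : ℕ} {M : Matrix (Fin n) (Fin n) R}
    (hM : IsPosMat M) : IsPosMat (M.map ψ) := by
  obtain ⟨N, rfl⟩ := hM
  refine ⟨N.map ψ, ?_⟩
  rw [← Matrix.conjTranspose_map _ (map_star ψ)]
  exact Matrix.map_mul (f := (ψ : R →+* S))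

lemma CompletelyPositive.starAlgHom_comp {A B C : Type*} [Ring A] [StarRing A] [Module ℂ A]
    [Ring B] [StarRing B] [Algebra ℂ B] [Ring C] [StarRing C] [Algebra ℂ C]
    {φ : A →ₗ[ℂ] B} (hφ : CompletelyPositive φ) (ψ : B →⋆ₐ[ℂ] C) :
    CompletelyPositive ((ψ : B →ₐ[ℂ] C).toLinearMap ∘ₗ φ) :=
  fun n M hM => (hφ n M hM).map ψ

lemma CompletelyPositive.exists_map_star_mul_self {A B : Type*} [Ring A] [StarRing A]
    [Module ℂ A] [Ring B] [StarRing B] [Module ℂ B] {φ : A →ₗ[ℂ] B} (hφ : CompletelyPositive φ)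
    (b : A) : ∃ N : B, φ (star b * b) = star N * N := by
  have hb : IsPosMat (Matrix.of fun _ _ : Fin 1 => star b * b) :=
    ⟨Matrix.of fun _ _ => b, by ext; simp [Matrix.mul_apply]⟩
  obtain ⟨N, hN⟩ := hφ 1 _ hb
  exact ⟨N 0 0, by simpa [Matrix.mul_apply] using congrFun (congrFun hN 0) 0⟩

lemma PositiveLinearMap.completelyPositive {A : Type*} [CStarAlgebra A] [PartialOrder A]
    [StarOrderedRing A] (f : A →ₚ[ℂ] ℂ) : CompletelyPositive (f : A →ₗ[ℂ] ℂ) := by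
  intro n M ⟨N, hMN⟩
  have hpsd : (M.map f).PosSemidef := by
    refine .of_dotProduct_mulVec_nonneg ?_ fun x => ?_
    · rw [Matrix.IsHermitian, ← Matrix.conjTranspose_map _ (map_star f), hMN,
        Matrix.conjTranspose_mul, Matrix.conjTranspose_conjTranspose]
    · set v : Fin n → A := fun k => x k • 1
      have hquad : star x ⬝ᵥ (M.map f *ᵥ x) = f (star v ⬝ᵥ (M *ᵥ v)) := by
        simp only [v, dotProduct, Matrix.mulVec, Matrix.map_apply, Pi.star_apply, star_smul,
          star_one, map_sum, Finset.mul_sum, smul_mul_assoc, mul_smul_comm,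
          one_mul, mul_one, map_smul, smul_eq_mul]
        refine Finset.sum_congr rfl fun j _ => Finset.sum_congr rfl fun k _ => ?_
        simp only [Complex.star_def]
        ring
      have hsq : star v ⬝ᵥ (M *ᵥ v) = star (N *ᵥ v) ⬝ᵥ (N *ᵥ v) := by
        rw [hMN, ← Matrix.mulVec_mulVec, Matrix.dotProduct_mulVec, Matrix.star_mulVec]
      rw [hquad, hsq]
      exact f.map_nonneg (Finset.sum_nonneg fun l _ => star_mul_self_nonneg _)
  open scoped MatrixOrder in
  obtain ⟨R, hR⟩ := CStarAlgebra.nonneg_iff_eq_star_mul_self.mp hpsd.nonneg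
  exact ⟨R, hR⟩

namespace lp

variable {𝕜 : Type*} [RCLike 𝕜] {ι : Type*}

lemma memℓp_infty_mul {p : ℝ≥0∞} (c : lp (fun _ : ι => 𝕜) ∞) (v : lp (fun _ : ι => 𝕜) p) :
    Memℓp (fun i => c i * v i) p :=
  ((lp.memℓp v).norm.const_mul ‖c‖).mono fun i => by
    rw [norm_mul]
    exact mul_le_mul_of_nonneg_right (norm_apply_le_norm ENNReal.top_ne_zero c i) (norm_nonneg _)

lemma nontrivial_of_nonempty {p : ℝ≥0∞} [Nonempty ι] : Nontrivial (lp (fun _ : ι => 𝕜) p) := by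
  classical
  obtain ⟨i⟩ := ‹Nonempty ι›
  exact ⟨lp.single p i 1, 0, fun h => by simpa using congrArg (· i) h⟩

variable {p : ℝ≥0∞} [Fact (1 ≤ p)]

noncomputable def mulOperator (c : lp (fun _ : ι => 𝕜) ∞) :
    lp (fun _ : ι => 𝕜) p →L[𝕜] lp (fun _ : ι => 𝕜) p :=
  LinearMap.mkContinuous
    { toFun v := ⟨fun i => c i * v i, memℓp_infty_mul c v⟩
      map_add' v w := lp.ext <| funext fun i => mul_add _ _ _
      map_smul' z v := lp.ext <| funext fun i => mul_smul_comm z _ _ }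
    ‖c‖ fun v => by
      have hp : p ≠ 0 := (zero_lt_one.trans_le Fact.out).ne'
      calc _ ≤ ‖(‖c‖ : 𝕜) • v‖ := lp.norm_mono hp fun i => by
            simp only [LinearMap.coe_mk, AddHom.coe_mk, lp.coeFn_smul, Pi.smul_apply, smul_eq_mul,
              norm_mul, RCLike.norm_ofReal, abs_norm]
            exact mul_le_mul_of_nonneg_right (norm_apply_le_norm ENNReal.top_ne_zero c i)
              (norm_nonneg _)
        _ = ‖c‖ * ‖v‖ := by rw [lp.norm_const_smul hp, RCLike.norm_ofReal, abs_norm]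

@[simp]
lemma mulOperator_apply (c : lp (fun _ : ι => 𝕜) ∞) (v : lp (fun _ : ι => 𝕜) p) (i : ι) :
    mulOperator c v i = c i * v i := rfl

lemma mulOperator_injective : Function.Injective
    (mulOperator : lp (fun _ : ι => 𝕜) ∞ → lp (fun _ : ι => 𝕜) p →L[𝕜] lp (fun _ : ι => 𝕜) p) := by
  classical
  intro c d hcd
  ext i
  simpa using congrArg (fun T => T (lp.single p i 1) i) hcd

noncomputable def mulOperatorStarAlgHom :
    lp (fun _ : ι => 𝕜) ∞ →⋆ₐ[𝕜] (lp (fun _ : ι => 𝕜) 2 →L[𝕜] lp (fun _ : ι => 𝕜) 2) where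
  toFun := mulOperator
  map_one' := by ext v i; simp [lp.infty_coeFn_one]
  map_mul' c d := by ext v i; simp [lp.infty_coeFn_mul, mul_assoc]
  map_zero' := by ext v i; simp
  map_add' c d := by ext v i; simp [add_mul]
  commutes' r := by ext v i; simp [Algebra.algebraMap_eq_smul_one, lp.infty_coeFn_one]
  map_star' c := by
    rw [ContinuousLinearMap.star_eq_adjoint, ContinuousLinearMap.eq_adjoint_iff]
    intro v w
    simp only [lp.inner_eq_tsum, mulOperator_apply, lp.star_apply, RCLike.inner_apply,
      RCLike.star_def, map_mul, RCLike.conj_conj]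
    congr 1 with i
    ring

end lp

lemma Matrix.norm_apply_sq_le_conjTranspose_mul_self {n : Type*} [Fintype n]
    (R : Matrix n n ℂ) (j k : n) : ‖R j k‖ ^ 2 ≤ ‖(Rᴴ * R) k k‖ := by
  have hdiag : (Rᴴ * R) k k = ((∑ l, ‖R l k‖ ^ 2 : ℝ) : ℂ) := by
    simp only [Matrix.mul_apply, Matrix.conjTranspose_apply, Complex.ofReal_sum,
      Complex.ofReal_pow, Complex.star_def, Complex.conj_mul']
  rw [hdiag, Complex.norm_real, Real.norm_of_nonneg (by positivity)]
  exact Finset.single_le_sum (f := fun l => ‖R l k‖ ^ 2) (fun _ _ => by positivity)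
    (Finset.mem_univ j)

lemma completelyPositive_of_forall_evalₗ_comp {A ι : Type*} [Ring A] [StarRing A] [Module ℂ A]
    (g : A →ₗ[ℂ] lp (fun _ : ι => ℂ) ∞)
    (hg : ∀ i, CompletelyPositive (lp.evalₗ (fun _ : ι => ℂ) ∞ i ∘ₗ g)) :
    CompletelyPositive g := by
  intro n M hM
  choose R hR using fun i => hg i n M hM
  have hR_apply (i : ι) (j k : Fin n) : g (M j k) i = ((R i)ᴴ * R i) j k :=
    congrFun (congrFun (hR i) j) k
  have hR_bdd (j k : Fin n) : BddAbove (Set.range fun i => ‖R i j k‖) := by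
    refine ⟨√‖g (M k k)‖, ?_⟩
    rintro - ⟨i, rfl⟩
    refine Real.le_sqrt_of_sq_le ((Matrix.norm_apply_sq_le_conjTranspose_mul_self _ j k).trans ?_)
    rw [← hR_apply]
    exact lp.norm_apply_le_norm ENNReal.top_ne_zero _ i
  refine ⟨Matrix.of fun j k => ⟨fun i => R i j k, memℓp_infty (hR_bdd j k)⟩, ?_⟩
  ext j k i
  rw [Matrix.map_apply, hR_apply, Matrix.mul_apply, Matrix.mul_apply, lp.coeFn_sum,
    Finset.sum_apply]
  rfl

lemma PositiveLinearMap.norm_apply_le_four_mul {A B : Type*} [CStarAlgebra A] [PartialOrder A]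
    [StarOrderedRing A] [CStarAlgebra B] [PartialOrder B] [StarOrderedRing B]
    (f : A →ₚ[ℂ] B) (a : A) : ‖f a‖ ≤ 4 * ‖f 1‖ * ‖a‖ := by
  obtain ⟨y, hy_nonneg, hy_norm, hy⟩ := CStarAlgebra.exists_sum_four_nonneg a
  calc ‖f a‖ = ‖∑ k : Fin 4, Complex.I ^ (k : ℕ) • f (y k)‖ := by
        rw [hy]; simp only [map_sum, map_smul]
    _ ≤ ∑ k : Fin 4, ‖f (y k)‖ := by
        refine (norm_sum_le _ _).trans_eq ?_
        simp only [norm_smul, norm_pow, Complex.norm_I, one_pow, one_mul]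
    _ ≤ ∑ _k : Fin 4, ‖f 1‖ * ‖a‖ := by
        gcongr with k
        exact (f.norm_apply_le_of_nonneg _ (hy_nonneg k)).trans (by gcongr; exact hy_norm k)
    _ = 4 * ‖f 1‖ * ‖a‖ := by simp [mul_assoc]

section LpInftyPi

variable {A ι : Type*} [AddCommGroup A] [Module ℂ A]

noncomputable def LinearMap.lpInftyPi (f : ι → A →ₗ[ℂ] ℂ)
    (hf : ∀ a, BddAbove (Set.range fun i => ‖f i a‖)) : A →ₗ[ℂ] lp (fun _ : ι => ℂ) ∞ where
  toFun a := ⟨fun i => f i a, memℓp_infty (hf a)⟩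
  map_add' a b := lp.ext <| funext fun i => map_add (f i) a b
  map_smul' z a := lp.ext <| funext fun i => map_smul (f i) z a

variable (f : ι → A →ₗ[ℂ] ℂ) (hf : ∀ a, BddAbove (Set.range fun i => ‖f i a‖))

@[simp]
lemma LinearMap.lpInftyPi_apply (a : A) (i : ι) : LinearMap.lpInftyPi f hf a i = f i a := rfl

lemma LinearMap.evalₗ_comp_lpInftyPi (i : ι) :
    lp.evalₗ (fun _ : ι => ℂ) ∞ i ∘ₗ LinearMap.lpInftyPi f hf = f i := rfl

lemma LinearMap.ker_lpInftyPi :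
    LinearMap.ker (LinearMap.lpInftyPi f hf) = ⨅ i, LinearMap.ker (f i) := by
  ext a
  simp only [LinearMap.mem_ker, Submodule.mem_iInf]
  exact ⟨fun h i => congrArg (· i) h, fun h => lp.ext <| funext h⟩

end LpInftyPi

section VectorState

variable {A H : Type*} [Ring A] [Module ℂ A]
  [NormedAddCommGroup H] [InnerProductSpace ℂ H]

noncomputable def vectorState (φ : A →ₗ[ℂ] (H →L[ℂ] H)) (v : H) : A →ₗ[ℂ] ℂ :=
  (innerₛₗ ℂ v).comp ((ContinuousLinearMap.apply ℂ H v).toLinearMap ∘ₗ φ)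

variable (φ : A →ₗ[ℂ] (H →L[ℂ] H))

@[simp]
lemma vectorState_apply (v : H) (a : A) : vectorState φ v a = inner ℂ v (φ a v) := rfl

lemma vectorState_map_one (hφ : φ 1 = 1) {v : H} (hv : v ∈ Metric.sphere (0 : H) 1) :
    vectorState φ v 1 = 1 := by
  rw [mem_sphere_zero_iff_norm] at hv
  simp [hφ, inner_self_eq_norm_sq_to_K, hv]

lemma vectorState_nonneg [StarRing A] [CompleteSpace H] {φ : A →ₗ[ℂ] (H →L[ℂ] H)}
    (hφ : CompletelyPositive φ) (v : H) (b : A) : 0 ≤ vectorState φ v (star b * b) := by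
  obtain ⟨N, hN⟩ := hφ.exists_map_star_mul_self b
  rw [vectorState_apply, hN]
  have hpos := (ContinuousLinearMap.nonneg_iff_isPositive _).mp (star_mul_self_nonneg N)
  exact hpos.inner_nonneg_right v

lemma ContinuousLinearMap.eq_zero_of_inner_map_self_sphere {T : H →L[ℂ] H}
    (hT : ∀ v ∈ Metric.sphere (0 : H) 1, inner ℂ v (T v) = 0) : T = 0 := by
  suffices h : ∀ x, inner ℂ (T x) x = 0 from
    ContinuousLinearMap.coe_injective <| (inner_map_self_eq_zero (T : H →ₗ[ℂ] H)).mp h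
  intro x
  rcases eq_or_ne x 0 with rfl | hx
  · simp
  have hx' : (‖x‖ : ℂ) ≠ 0 := by exact_mod_cast norm_ne_zero_iff.mpr hx
  set u := (‖x‖⁻¹ : ℂ) • x
  have hu : u ∈ Metric.sphere (0 : H) 1 := by
    simp [u, norm_smul, hx]
  have hxu : x = (‖x‖ : ℂ) • u := by simp [u, smul_smul, hx']
  rw [← inner_conj_symm, hxu, map_smul, inner_smul_left, inner_smul_right, hT u hu]
  simp

lemma ker_eq_iInf_ker_vectorState :
    LinearMap.ker φ = ⨅ v : Metric.sphere (0 : H) 1, LinearMap.ker (vectorState φ v) := by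
  ext a
  simp only [LinearMap.mem_ker, Submodule.mem_iInf, vectorState_apply]
  refine ⟨fun h v => by simp [h], fun h => ?_⟩
  exact ContinuousLinearMap.eq_zero_of_inner_map_self_sphere fun v hv => h ⟨v, hv⟩

end VectorState

/-- A subspace `J` of a unital C*-algebra `A` is the kernel of a unital completely
positive map into some `B(H)` (`H ≠ 0`) iff it is the intersection of the kernels of a
nonempty family of states of `A`. -/
theorem stmt1 {A : Type*} [CStarAlgebra A] [PartialOrder A] [StarOrderedRing A]
    (J : Submodule ℂ A) :
    (∃ (H : Type) (_ : NormedAddCommGroup H) (_ : InnerProductSpace ℂ H)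
        (_ : CompleteSpace H) (_ : Nontrivial H) (φ : A →ₗ[ℂ] (H →L[ℂ] H)),
        φ 1 = 1 ∧ CompletelyPositive φ ∧ LinearMap.ker φ = J) ↔
    (∃ (ι : Type) (_ : Nonempty ι) (f : ι → (A →ₗ[ℂ] ℂ)),
        (∀ i, f i 1 = 1 ∧ ∀ a : A, 0 ≤ a → 0 ≤ f i a) ∧
        (⨅ i, LinearMap.ker (f i)) = J) := by
  constructor
  · rintro ⟨H, _, _, _, _, φ, hφ1, hφ, rfl⟩
    refine ⟨Metric.sphere (0 : H) 1, (NormedSpace.sphere_nonempty.mpr zero_le_one).to_subtype,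
      fun v => vectorState φ v, fun v => ⟨vectorState_map_one φ hφ1 v.2, fun a ha => ?_⟩,
      (ker_eq_iInf_ker_vectorState φ).symm⟩
    obtain ⟨b, rfl⟩ := CStarAlgebra.nonneg_iff_eq_star_mul_self.mp ha
    exact vectorState_nonneg hφ v b
  · rintro ⟨ι, _, f, hf, rfl⟩
    let state i : A →ₚ[ℂ] ℂ := .mk₀ (f i) (hf i).2
    have hbdd a : BddAbove (Set.range fun i => ‖f i a‖) := ⟨4 * ‖a‖, by
      rintro - ⟨i, rfl⟩
      have h : ‖f i a‖ ≤ 4 * ‖f i 1‖ * ‖a‖ := (state i).norm_apply_le_four_mul a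
      rwa [(hf i).1, norm_one, mul_one] at h⟩
    let F := LinearMap.lpInftyPi f hbdd
    have hF : CompletelyPositive F := completelyPositive_of_forall_evalₗ_comp F fun i => by
      rw [LinearMap.evalₗ_comp_lpInftyPi]
      exact (state i).completelyPositive
    refine ⟨lp (fun _ : ι => ℂ) 2, inferInstance, inferInstance, inferInstance,
      lp.nontrivial_of_nonempty, _, ?_, hF.starAlgHom_comp lp.mulOperatorStarAlgHom, ?_⟩
    · have hF1 : F 1 = 1 := lp.ext <| funext fun i => by simp [F, lp.infty_coeFn_one, (hf i).1]
      rw [LinearMap.comp_apply, hF1, AlgHom.toLinearMap_apply, map_one]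
    · rw [LinearMap.ker_comp_of_ker_eq_bot, LinearMap.ker_lpInftyPi]
      exact LinearMap.ker_eq_bot_of_injective lp.mulOperator_injective
end

section
/- Let n ≥ 2 be a natural number and let B be a C*-algebra. There is no completely positive ℂ-linear map φ : Mₙ(ℂ) → B whose kernel equals the complex linear span of the matrix unit E₁₁; in other words, the span of E₁₁ in Mₙ(ℂ), although a closed non-unital self-adjoint subspace, is not the kernel of any completely positive map on Mₙ(ℂ). -/
theorem eq_zero_of_star_mul_self_add_star_mul_self_eq_zero {A : Type*}
    [NonUnitalNormedRing A] [StarRing A] [CStarRing A] [PartialOrder A] [StarOrderedRing A]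
    {a b : A} (h : star a * a + star b * b = 0) : a = 0 ∧ b = 0 := by
  obtain ⟨ha, hb⟩ :=
    (add_eq_zero_iff_of_nonneg (star_mul_self_nonneg a) (star_mul_self_nonneg b)).mp h
  exact ⟨CStarRing.star_mul_self_eq_zero_iff a |>.mp ha,
    CStarRing.star_mul_self_eq_zero_iff b |>.mp hb⟩

theorem IsPosMat.apply_zero_one_eq_zero_of_apply_zero_zero {B : Type*} [CStarAlgebra B]
    {M : Matrix (Fin 2) (Fin 2) B} (hM : IsPosMat M) (h : M 0 0 = 0) : M 0 1 = 0 := by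
  let := CStarAlgebra.spectralOrder B
  have := CStarAlgebra.spectralOrderedRing B
  obtain ⟨Q, rfl⟩ := hM
  simp only [Matrix.mul_apply, Fin.sum_univ_two, Matrix.conjTranspose_apply] at h ⊢
  obtain ⟨hQ₀, hQ₁⟩ := eq_zero_of_star_mul_self_add_star_mul_self_eq_zero h
  simp [hQ₀, hQ₁]

theorem Matrix.isPosMat_single_block {R : Type*} [CommRing R] [StarRing R]
    {m : Type*} [Fintype m] [DecidableEq m] (i j : m) :
    IsPosMat !![single i i (1 : R), single i j 1; single j i 1, single j j 1] := by
  refine ⟨!![single i i 1, single i j 1; 0, 0], ?_⟩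
  ext a b : 2
  fin_cases a <;> fin_cases b <;>
    simp [Matrix.mul_apply, Fin.sum_univ_two, Matrix.conjTranspose_apply,
      Matrix.star_eq_conjTranspose, Matrix.conjTranspose_single]

theorem CompletelyPositive.map_single_eq_zero {B : Type*} [CStarAlgebra B]
    {m : Type*} [Fintype m] [DecidableEq m] {φ : Matrix m m ℂ →ₗ[ℂ] B}
    (hφ : CompletelyPositive φ) {i : m} (hi : φ (Matrix.single i i 1) = 0) (j : m) :
    φ (Matrix.single i j 1) = 0 := by
  have hpos := hφ 2 _ (Matrix.isPosMat_single_block (R := ℂ) i j)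
  simpa using hpos.apply_zero_one_eq_zero_of_apply_zero_zero (by simpa using hi)

theorem Matrix.single_notMem_span_single {R : Type*} [Semiring R] [Nontrivial R]
    {m : Type*} [DecidableEq m] {i j l : m} (hjl : j ≠ l) :
    single i j (1 : R) ∉ Submodule.span R {single i l 1} := by
  intro hmem
  obtain ⟨c, hc⟩ := Submodule.mem_span_singleton.mp hmem
  simpa [hjl.symm] using congrFun (congrFun hc i) j

/-- For `n ≥ 2`, the span of the matrix unit `E₁₁` in `Mₙ(ℂ)` is not the kernel of
any completely positive map on `Mₙ(ℂ)`. -/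
theorem stmt3 {B : Type*} [CStarAlgebra B] (n : ℕ) (hn : 2 ≤ n)
    (φ : Matrix (Fin n) (Fin n) ℂ →ₗ[ℂ] B) (hφ : CompletelyPositive φ) :
    LinearMap.ker φ ≠
      Submodule.span ℂ {Matrix.single ⟨0, by omega⟩ ⟨0, by omega⟩ (1 : ℂ)} := by
  intro hker
  have h₀₀ : φ (Matrix.single ⟨0, by omega⟩ ⟨0, by omega⟩ 1) = 0 :=
    LinearMap.mem_ker.mp (hker ▸ Submodule.mem_span_singleton_self _)
  have h₀₁ := hφ.map_single_eq_zero h₀₀ ⟨1, by omega⟩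
  exact Matrix.single_notMem_span_single (by simp [Fin.ext_iff])
    (hker ▸ LinearMap.mem_ker.mpr h₀₁)
end

section
/- Let A be a unital C*-algebra and let y ∈ A be a self-adjoint element with ¬(0 ≤ y) and ¬(y ≤ 0). Let x ∈ A be self-adjoint. If for every ε > 0 there exists a real number α such that 0 ≤ ε·1 + x + α·y in A, then there exists a real number α₀ such that 0 ≤ x + α₀·y in A. -/
open Filter Topology


/-- Let `y` be a self-adjoint element of a unital C*-algebra `A` which is neither positive
nor negative, and let `x` be self-adjoint. If for every `ε > 0` there is `α : ℝ` with
`0 ≤ ε•1 + x + α•y`, then there is `α₀ : ℝ` with `0 ≤ x + α₀•y`. -/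
theorem stmt5 {A : Type*} [CStarAlgebra A] [PartialOrder A] [StarOrderedRing A]
    (y : A) (hy : IsSelfAdjoint y) (hpos : ¬ (0 ≤ y)) (hneg : ¬ (y ≤ 0))
    (x : A) (hx : IsSelfAdjoint x)
    (h : ∀ ε : ℝ, 0 < ε → ∃ α : ℝ, 0 ≤ ε • (1 : A) + x + α • y) :
    ∃ α₀ : ℝ, 0 ≤ x + α₀ • y := by
  set S : Set ℝ := {α | 0 ≤ (1:A) + x + α • y} with hSdef
  have hScl : IsClosed S := by
    have hcont : Continuous fun α : ℝ => (1:A) + x + α • y := by fun_prop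
    exact CStarAlgebra.isClosed_nonneg.preimage hcont
  -- S is bounded above
  have hub : ∃ M : ℝ, ∀ α ∈ S, α ≤ M := by
    by_contra hM
    push_neg at hM
    choose u hu hun using fun n : ℕ => hM ((n:ℝ) + 1)
    have hupos : ∀ n, 0 < u n := fun n => lt_trans (by positivity) (hun n)
    have key : ∀ n, 0 ≤ (u n)⁻¹ • ((1:A) + x) + y := by
      intro n
      have h0 := smul_nonneg (inv_pos.mpr (hupos n)).le (hu n)
      have heq : (u n)⁻¹ • ((1:A) + x + u n • y) = (u n)⁻¹ • ((1:A) + x) + y := by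
        rw [smul_add, smul_smul, inv_mul_cancel₀ (hupos n).ne', one_smul]
      rwa [heq] at h0
    have hutop : Tendsto u atTop atTop :=
      tendsto_atTop_mono (fun n => (hun n).le)
        (tendsto_atTop_add_const_right atTop 1 tendsto_natCast_atTop_atTop)
    have hlim : Tendsto (fun n => (u n)⁻¹ • ((1:A) + x) + y) atTop (𝓝 y) := by
      have h1 : Tendsto (fun n => (u n)⁻¹) atTop (𝓝 0) := hutop.inv_tendsto_atTop
      have := (h1.smul_const ((1:A) + x)).add (tendsto_const_nhds (x := y))
      simpa using this
    exact hpos (CStarAlgebra.isClosed_nonneg.mem_of_tendsto hlim (Eventually.of_forall key))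
  -- S is bounded below
  have hlb : ∃ m : ℝ, ∀ α ∈ S, m ≤ α := by
    by_contra hM
    push_neg at hM
    choose u hu hun using fun n : ℕ => hM (-((n:ℝ) + 1))
    have huneg : ∀ n, 0 < -u n := fun n => neg_pos.mpr ((hun n).trans (neg_lt_zero.mpr (by positivity)))
    have key : ∀ n, 0 ≤ (-u n)⁻¹ • ((1:A) + x) + (-y) := by
      intro n
      have h0 := smul_nonneg (inv_pos.mpr (huneg n)).le (hu n)
      have heq : (-u n)⁻¹ • ((1:A) + x + u n • y) = (-u n)⁻¹ • ((1:A) + x) + (-y) := by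
        rw [smul_add, smul_smul]
        congr 1
        have hne : u n ≠ 0 := ne_of_lt (neg_pos.mp (huneg n))
        rw [inv_neg, neg_mul, inv_mul_cancel₀ hne, neg_one_smul]
      rwa [heq] at h0
    have hutop : Tendsto (fun n => -u n) atTop atTop :=
      tendsto_atTop_mono (fun n => le_of_lt (by have := hun n; linarith only [this]))
        (tendsto_atTop_add_const_right atTop 1 tendsto_natCast_atTop_atTop)
    have hlim : Tendsto (fun n => (-u n)⁻¹ • ((1:A) + x) + (-y)) atTop (𝓝 (-y)) := by
      have h1 : Tendsto (fun n => (-u n)⁻¹) atTop (𝓝 0) := hutop.inv_tendsto_atTop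
      have := (h1.smul_const ((1:A) + x)).add (tendsto_const_nhds (x := -y))
      simpa using this
    have : (0:A) ≤ -y :=
      CStarAlgebra.isClosed_nonneg.mem_of_tendsto hlim (Eventually.of_forall key)
    exact hneg (neg_nonneg.mp this)
  obtain ⟨M, hM⟩ := hub
  obtain ⟨m, hm⟩ := hlb
  -- a sequence of witnesses
  choose α hα using fun n : ℕ => h (((n:ℝ) + 1)⁻¹) (by positivity)
  have hαS : ∀ n, α n ∈ S := by
    intro n
    have h2 : (0:A) ≤ (1 - ((n:ℝ) + 1)⁻¹) • (1:A) := by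
      apply smul_nonneg _ zero_le_one
      have : ((n:ℝ) + 1)⁻¹ ≤ 1 := by
        rw [inv_le_one_iff₀]; right; linarith only [Nat.cast_nonneg (α := ℝ) n]
      linarith only [this]
    have h3 := add_nonneg (hα n) h2
    have heq : ((n:ℝ) + 1)⁻¹ • (1:A) + x + α n • y + (1 - ((n:ℝ) + 1)⁻¹) • (1:A)
        = (1:A) + x + α n • y := by module
    rwa [heq] at h3
  -- extract a convergent subsequence within [m, M]
  have hmem : ∀ n, α n ∈ Set.Icc m M := fun n => ⟨hm _ (hαS n), hM _ (hαS n)⟩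
  obtain ⟨α₀, -, φ, hφ, hαφ⟩ := (isCompact_Icc (a := m) (b := M)).tendsto_subseq hmem
  refine ⟨α₀, ?_⟩
  have key : ∀ k, 0 ≤ ((φ k : ℝ) + 1)⁻¹ • (1:A) + x + α (φ k) • y := fun k => hα (φ k)
  have hlim : Tendsto (fun k => ((φ k : ℝ) + 1)⁻¹ • (1:A) + x + α (φ k) • y)
      atTop (𝓝 (x + α₀ • y)) := by
    have h0 : Tendsto (fun k => ((φ k : ℝ) + 1)⁻¹) atTop (𝓝 0) := by
      apply Tendsto.inv_tendsto_atTop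
      apply tendsto_atTop_mono (f := fun k : ℕ => (k:ℝ) + 1) (fun k => by
        have hk : (k:ℝ) ≤ (φ k : ℝ) := Nat.cast_le.mpr hφ.le_apply
        show (k:ℝ) + 1 ≤ (φ k : ℝ) + 1
        linarith only [hk])
      exact tendsto_atTop_add_const_right atTop 1 tendsto_natCast_atTop_atTop
    have := ((h0.smul_const (1:A)).add (tendsto_const_nhds (x := x))).add (hαφ.smul_const y)
    simpa using this
  exact CStarAlgebra.isClosed_nonneg.mem_of_tendsto hlim (Eventually.of_forall key)
end

section
/- Let A be a unital C*-algebra and let y ∈ A be a self-adjoint element with ¬(0 ≤ y) and ¬(y ≤ 0). Then for every self-adjoint x ∈ A, the set {α ∈ ℝ : 0 ≤ 1 + x + α·y} of real numbers is bounded. -/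
/-! If `0 ≤ a + α • z` for arbitrarily large `α > 0`, then dividing by `α` gives
`0 ≤ α⁻¹ • a + z` along a sequence converging to `z`, and closedness of the positive cone forces
`0 ≤ z`. Applied to `y` and `-y` with `a = 1 + x`, this bounds the set from above and below. -/

open Filter Topology

section

variable {E : Type*} [AddCommGroup E] [PartialOrder E] [Module ℝ E] [PosSMulMono ℝ E]
  [TopologicalSpace E] [ContinuousSMul ℝ E] [ContinuousAdd E] [ClosedIciTopology E]

theorem bddAbove_setOf_nonneg_add_smul {z : E} (hz : ¬ 0 ≤ z) (a : E) :
    BddAbove {α : ℝ | 0 ≤ a + α • z} := by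
  by_contra h
  have hfreq : ∃ᶠ α : ℝ in atTop, 0 ≤ α⁻¹ • a + z := by
    refine frequently_atTop.2 fun b => ?_
    obtain ⟨α, hα, hbα⟩ := not_bddAbove_iff.1 h (max b 1)
    have hα_pos : 0 < α := by linarith [le_max_right b 1]
    refine ⟨α, by linarith [le_max_left b 1], ?_⟩
    have := smul_nonneg (inv_pos.2 hα_pos).le hα
    rwa [smul_add, smul_smul, inv_mul_cancel₀ hα_pos.ne', one_smul] at this
  have hlim : Tendsto (fun α : ℝ => α⁻¹ • a + z) atTop (𝓝 z) := by
    simpa using ((tendsto_inv_atTop_zero (𝕜 := ℝ)).smul_const a).add_const z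
  exact hz (isClosed_Ici.mem_of_frequently_of_tendsto hfreq hlim)

theorem bddBelow_setOf_nonneg_add_smul [IsOrderedAddMonoid E] {z : E} (hz : ¬ z ≤ 0) (a : E) :
    BddBelow {α : ℝ | 0 ≤ a + α • z} := by
  have h_neg : -{α : ℝ | 0 ≤ a + α • z} = {α : ℝ | 0 ≤ a + α • -z} := by
    ext α
    simp [neg_smul, smul_neg]
  rw [← bddAbove_neg, h_neg]
  exact bddAbove_setOf_nonneg_add_smul (by rwa [neg_nonneg]) a

end

theorem stmt6_general {A : Type*} [CStarAlgebra A] [PartialOrder A] [StarOrderedRing A]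
    (y : A) (hpos : ¬ (0 ≤ y)) (hneg : ¬ (y ≤ 0)) :
    ∀ x : A, IsSelfAdjoint x →
      Bornology.IsBounded {α : ℝ | 0 ≤ (1 : A) + x + α • y} :=
  fun _ _ => (bddBelow_setOf_nonneg_add_smul hneg _).isBounded
    (bddAbove_setOf_nonneg_add_smul hpos _)

/-- Let `y` be a self-adjoint element of a unital C*-algebra `A` which is neither positive
nor negative. Then for every self-adjoint `x`, the set `{α : ℝ | 0 ≤ 1 + x + α•y}` is
bounded. -/
theorem stmt6 {A : Type*} [CStarAlgebra A] [PartialOrder A] [StarOrderedRing A]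
    (y : A) (hy : IsSelfAdjoint y) (hpos : ¬ (0 ≤ y)) (hneg : ¬ (y ≤ 0)) :
    ∀ x : A, IsSelfAdjoint x →
      Bornology.IsBounded {α : ℝ | 0 ≤ (1 : A) + x + α • y} :=
  stmt6_general y hpos hneg
end

section
/- Let n ≥ 1 be a natural number. In ℓ∞₄, let y = (−1, 0, n, 2n) and x = (0, 1, n+1, 0). Then the distance from x to the complex linear span of y equals 2(n+1)/3; that is, the infimum over μ ∈ ℂ of ‖x − μ·y‖ equals 2(n+1)/3. (This is the norm of x + span{y} in the operator space quotient ℓ∞₄/span{y}.) -/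
/-!
Write `x - μ • y` for the vector whose sup norm is being minimised. Its third and fourth
coordinates are `(n + 1) - μ n` and `-2 μ n`, and `‖a‖ ≤ ‖a - c‖ + ‖c‖` forces
`max ‖a - c‖ (2 ‖c‖) ≥ 2 ‖a‖ / 3`; with `a = n + 1` this is the lower bound.
Balancing the two coordinates, `μ = (n + 1) / (3 n)` attains it, the first two coordinates
staying below `2 (n + 1) / 3` because `n ≥ 1`.
-/

lemma two_mul_norm_div_three_le_max {E : Type*} [SeminormedAddCommGroup E] (a c : E) :
    2 * ‖a‖ / 3 ≤ max ‖a - c‖ (2 * ‖c‖) := by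
  have := norm_le_norm_sub_add a c
  have := le_max_left ‖a - c‖ (2 * ‖c‖)
  have := le_max_right ‖a - c‖ (2 * ‖c‖)
  linarith

lemma le_norm_sub_smul (n : ℕ) (μ : ℂ) :
    2 * ((n : ℝ) + 1) / 3 ≤ ‖(![0, 1, (n : ℂ) + 1, 0] : Fin 4 → ℂ)
        - μ • (![(-1 : ℂ), 0, (n : ℂ), 2 * (n : ℂ)] : Fin 4 → ℂ)‖ := by
  set v := (![0, 1, (n : ℂ) + 1, 0] : Fin 4 → ℂ)
    - μ • (![(-1 : ℂ), 0, (n : ℂ), 2 * (n : ℂ)] : Fin 4 → ℂ)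
  have hv2 : v 2 = ((n : ℂ) + 1) - μ * n := by simp [v]
  have hv3 : ‖v 3‖ = 2 * ‖μ * n‖ := by simp [v]; ring
  have hn1 : ‖(n : ℂ) + 1‖ = (n : ℝ) + 1 := by exact_mod_cast Complex.norm_natCast (n + 1)
  calc 2 * ((n : ℝ) + 1) / 3 ≤ max ‖v 2‖ ‖v 3‖ := by
        rw [hv2, hv3, ← hn1]; exact two_mul_norm_div_three_le_max _ _
    _ ≤ ‖v‖ := max_le (norm_le_pi_norm v 2) (norm_le_pi_norm v 3)

lemma norm_sub_smul_le {n : ℕ} (hn : 1 ≤ n) :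
    ‖(![0, 1, (n : ℂ) + 1, 0] : Fin 4 → ℂ)
        - (((n + 1) / (3 * n) : ℝ) : ℂ) • (![(-1 : ℂ), 0, (n : ℂ), 2 * (n : ℂ)] : Fin 4 → ℂ)‖
      ≤ 2 * ((n : ℝ) + 1) / 3 := by
  have hn' : (1 : ℝ) ≤ n := by exact_mod_cast hn
  have hnC : (n : ℂ) ≠ 0 := by exact_mod_cast (by omega : n ≠ 0)
  have hμ : 0 ≤ ((n : ℝ) + 1) / (3 * n) := by positivity
  rw [pi_norm_le_iff_of_nonneg (by positivity)]
  intro i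
  fin_cases i <;> simp only [Fin.zero_eta, Fin.mk_one, Fin.reduceFinMk, Pi.sub_apply,
    Pi.smul_apply, smul_eq_mul, Matrix.cons_val, Matrix.cons_val_zero, Matrix.cons_val_one]
  · rw [zero_sub, mul_neg_one, neg_neg, Complex.norm_real, Real.norm_of_nonneg hμ,
      div_le_div_iff₀ (by positivity) (by norm_num)]
    nlinarith
  · simp only [mul_zero, sub_zero, norm_one]; linarith
  · rw [show (n : ℂ) + 1 - (((n + 1) / (3 * n) : ℝ) : ℂ) * n
          = ((2 * ((n : ℝ) + 1) / 3 : ℝ) : ℂ) by push_cast; field_simp; ring,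
      Complex.norm_real, Real.norm_of_nonneg (by positivity)]
  · rw [show (0 : ℂ) - (((n + 1) / (3 * n) : ℝ) : ℂ) * (2 * n)
          = ((-(2 * ((n : ℝ) + 1) / 3) : ℝ) : ℂ) by push_cast; field_simp; ring,
      Complex.norm_real, norm_neg, Real.norm_of_nonneg (by positivity)]

/-- In `ℓ∞₄ = (Fin 4 → ℂ)` with the sup norm, for `y = (−1, 0, n, 2n)` and
`x = (0, 1, n+1, 0)` the distance from `x` to `span ℂ {y}` equals `2(n+1)/3`. -/
theorem stmt7 (n : ℕ) (hn : 1 ≤ n) :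
    (⨅ μ : ℂ, ‖(![0, 1, (n : ℂ) + 1, 0] : Fin 4 → ℂ)
        - μ • (![(-1 : ℂ), 0, (n : ℂ), 2 * (n : ℂ)] : Fin 4 → ℂ)‖)
      = 2 * ((n : ℝ) + 1) / 3 :=
  le_antisymm
    ((ciInf_le ⟨0, Set.forall_mem_range.2 fun _ => norm_nonneg _⟩ _).trans
      (norm_sub_smul_le hn))
    (le_ciInf (le_norm_sub_smul n))
end

section
/- Let n ≥ 1 be a natural number. In ℓ∞₄, let y = (−1, 0, n, 2n), x = (0, 1, n+1, 0), and e = (1,1,1,1). Then sInf { λ : ℝ | 0 ≤ λ and for every ε > 0 there exists μ ∈ ℂ such that (λ + ε)·e − x + μ·y is a positive element of ℓ∞₄ } = 1. (Since x + span{y} is a positive element of the quotient operator system ℓ∞₄/span{y}, this infimum is the operator system quotient norm of x + span{y}; in particular it is much smaller than the operator space quotient norm 2(n+1)/3.) -/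
open scoped ComplexOrder

/-- In `ℓ∞₄ = (Fin 4 → ℂ)`, with `y = (−1, 0, n, 2n)`, `x = (0, 1, n+1, 0)` and
`e = (1,1,1,1)`, the operator system quotient norm of `x + span{y}` equals `1`:
`sInf {λ : ℝ | 0 ≤ λ ∧ ∀ ε > 0, ∃ μ : ℂ, 0 ≤ (λ+ε)•e − x + μ•y} = 1`. -/
theorem stmt8 (n : ℕ) (hn : 1 ≤ n) :
    sInf {l : ℝ | 0 ≤ l ∧ ∀ ε : ℝ, 0 < ε → ∃ μ : ℂ,
        (0 : Fin 4 → ℂ) ≤ (l + ε) • (1 : Fin 4 → ℂ)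
          - (![0, 1, (n : ℂ) + 1, 0] : Fin 4 → ℂ)
          + μ • (![(-1 : ℂ), 0, (n : ℂ), 2 * (n : ℂ)] : Fin 4 → ℂ)} = 1 := by
  apply IsLeast.csInf_eq
  constructor
  · refine ⟨zero_le_one, fun ε hε => ⟨1, fun i => ?_⟩⟩
    fin_cases i <;>
      simp [Complex.le_def, Matrix.vecHead, Matrix.vecTail, Pi.smul_apply, Pi.one_apply, Complex.real_smul] <;>
      push_cast <;> linarith
  · rintro l ⟨hl0, hl⟩
    refine le_of_forall_pos_le_add fun ε hε => ?_
    obtain ⟨μ, hμ⟩ := hl ε hε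
    have h1 := hμ 1
    simp [Complex.le_def, Matrix.vecHead, Matrix.vecTail, Pi.smul_apply, Pi.one_apply, Complex.real_smul] at h1
    linarith
end

section
/- Let A be a unital C*-algebra, let I be a closed two-sided ideal of A, and let (e_α) be a quasi-central approximate unit for I indexed by a nonempty directed preordered set. Then for all a, b ∈ A, the limit superior along the net of ‖e_α·a + (1 − e_α)·b‖ is at most max(‖a‖, dist(b, I)), where dist(b, I) is the distance from b to the set I. -/
/-!
Pick `y ∈ I` with `‖b - y‖` close to `dist(b, I)` and put `c = b - y`. Since `e_α y → y`, it is
enough to show that `x = e a + (1 - e) c` has norm asymptotically at most `M = max ‖a‖ ‖c‖`.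
With `r = √(e (1 - e))` one has
`x x* = e (a a*) e + (1 - e) (c c*) (1 - e) + r (a c* + c a*) r + (E + E*)`, where `E` is built from
the commutators of `e` and `r` with `a c*`. As `a c* + c a* ≤ a a* + c c*`, the first three terms
are at most `M² (e² + (1 - e)² + 2 r²) = M²`, so `‖x‖² = ‖x x*‖ ≤ M² + 2 ‖E‖`. Quasi-centrality
kills the commutators with `e`, and, approximating `√(y (1 - y))` uniformly by polynomials on the
spectrum, also those with `r`.
-/

open Filter Polynomial Topology

section Commutator

variable {𝕜 R : Type*} [NormedField 𝕜] [NormedRing R] [NormedAlgebra 𝕜 R]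

lemma norm_pow_mul_le {s : R} (hs : ‖s‖ ≤ 1) (y : R) (n : ℕ) : ‖s ^ n * y‖ ≤ ‖y‖ := by
  induction n with
  | zero => rw [pow_zero, one_mul]
  | succ n ih =>
    rw [pow_succ', mul_assoc]
    exact (norm_mul_le _ _).trans ((mul_le_of_le_one_left (norm_nonneg _) hs).trans ih)

lemma norm_pow_mul_sub_mul_pow_le {s : R} (hs : ‖s‖ ≤ 1) (x : R) (n : ℕ) :
    ‖s ^ n * x - x * s ^ n‖ ≤ n * ‖s * x - x * s‖ := by
  induction n with
  | zero => simp
  | succ n ih =>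
    have hsplit : s ^ (n + 1) * x - x * s ^ (n + 1)
        = s ^ n * (s * x - x * s) + (s ^ n * x - x * s ^ n) * s := by
      rw [pow_succ]; noncomm_ring
    calc ‖s ^ (n + 1) * x - x * s ^ (n + 1)‖
        ≤ ‖s * x - x * s‖ + ‖s ^ n * x - x * s ^ n‖ := by
          rw [hsplit]
          refine (norm_add_le _ _).trans (add_le_add (norm_pow_mul_le hs _ n) ?_)
          exact (norm_mul_le _ _).trans (mul_le_of_le_one_right (norm_nonneg _) hs)
      _ ≤ (n + 1 : ℕ) * ‖s * x - x * s‖ := by push_cast; linarith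

lemma norm_mul_sub_mul_le_norm_sub_add (u v x : R) :
    ‖u * x - x * u‖ ≤ 2 * ‖u - v‖ * ‖x‖ + ‖v * x - x * v‖ := by
  have hsplit : u * x - x * u = ((u - v) * x - x * (u - v)) + (v * x - x * v) := by noncomm_ring
  calc ‖u * x - x * u‖ ≤ ‖(u - v) * x‖ + ‖x * (u - v)‖ + ‖v * x - x * v‖ := by
        rw [hsplit]; exact (norm_add_le _ _).trans (by gcongr; exact norm_sub_le _ _)
    _ ≤ ‖u - v‖ * ‖x‖ + ‖x‖ * ‖u - v‖ + ‖v * x - x * v‖ := by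
        gcongr <;> exact norm_mul_le _ _
    _ = 2 * ‖u - v‖ * ‖x‖ + ‖v * x - x * v‖ := by ring

variable {ι : Type*} {l : Filter ι} {s : ι → R} {x : R}

lemma tendsto_norm_aeval_mul_sub_mul_aeval (hs : ∀ i, ‖s i‖ ≤ 1)
    (hsx : Tendsto (fun i => ‖s i * x - x * s i‖) l (𝓝 0)) (q : 𝕜[X]) :
    Tendsto (fun i => ‖aeval (s i) q * x - x * aeval (s i) q‖) l (𝓝 0) := by
  induction q using Polynomial.induction_on' with
  | add p q hp hq =>
    refine squeeze_zero (fun _ => norm_nonneg _) (fun i => ?_) (by simpa using hp.add hq)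
    rw [map_add, add_mul, mul_add, add_sub_add_comm]
    exact norm_add_le _ _
  | monomial n c =>
    refine squeeze_zero (fun _ => norm_nonneg _) (fun i => ?_)
      (by simpa using hsx.const_mul (‖c‖ * n))
    rw [aeval_monomial, ← Algebra.smul_def, smul_mul_assoc, mul_smul_comm, ← smul_sub,
      norm_smul, mul_assoc]
    gcongr
    exact norm_pow_mul_sub_mul_pow_le (hs i) x n

end Commutator

section StarRing

variable {R : Type*} [Ring R] [StarRing R]

lemma mul_add_one_sub_mul_mul_star_eq {t r : R} (ht : IsSelfAdjoint t) (hr : IsSelfAdjoint r)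
    (hrt : r * r = t * (1 - t)) (a c : R) :
    let w := a * star c
    let E := (t * w - w * t) * (1 - t) - (r * w - w * r) * r
    (t * a + (1 - t) * c) * star (t * a + (1 - t) * c)
      = t * (a * star a) * t + (1 - t) * (c * star c) * (1 - t) + r * (w + star w) * r
        + (E + star E) := by
  intro w E
  have hE : t * w * (1 - t) = r * w * r + E := by
    have : r * w * r + E = t * w * (1 - t) - w * t * (1 - t) + w * (r * r) := by
      simp only [E]; noncomm_ring
    rw [this, hrt]; noncomm_ring
  have hE' : (1 - t) * star w * t = r * star w * r + star E := by
    have := congrArg star hE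
    simpa only [star_mul, star_add, star_sub, star_one, ht.star_eq, hr.star_eq, mul_assoc]
      using this
  have hsw : star w = c * star a := by simp [w]
  calc (t * a + (1 - t) * c) * star (t * a + (1 - t) * c)
      = t * (a * star a) * t + (1 - t) * (c * star c) * (1 - t)
        + t * w * (1 - t) + (1 - t) * star w * t := by
        simp only [hsw, star_add, star_mul, star_sub, star_one, ht.star_eq, w]; noncomm_ring
    _ = _ := by rw [hE, hE']; noncomm_ring

end StarRing

section CStarAlgebra

variable {A : Type*} [CStarAlgebra A]

lemma spectrum_subset_Icc_of_norm_le_one {s : A} (hs : ‖s‖ ≤ 1) :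
    spectrum ℝ s ⊆ Set.Icc (-1) 1 := by
  intro y hy
  cases subsingleton_or_nontrivial A
  · simp [spectrum.of_subsingleton] at hy
  exact abs_le.1 ((spectrum.norm_le_norm_of_mem hy).trans hs)

lemma tendsto_norm_cfc_mul_sub_mul_cfc {ι : Type*} {l : Filter ι} {s : ι → A} {x : A}
    (hsa : ∀ i, IsSelfAdjoint (s i)) (hs : ∀ i, ‖s i‖ ≤ 1)
    (hsx : Tendsto (fun i => ‖s i * x - x * s i‖) l (𝓝 0))
    {f : ℝ → ℝ} (hf : ContinuousOn f (Set.Icc (-1) 1)) :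
    Tendsto (fun i => ‖cfc f (s i) * x - x * cfc f (s i)‖) l (𝓝 0) := by
  rw [Metric.tendsto_nhds]
  intro ε hε
  set δ := ε / (4 * ‖x‖ + 1)
  have hδ : 0 < δ := by positivity
  obtain ⟨q, hq⟩ := exists_polynomial_near_of_continuousOn (-1) 1 f hf δ hδ
  filter_upwards [Metric.tendsto_nhds.1 (tendsto_norm_aeval_mul_sub_mul_aeval hs hsx q) (ε / 2)
    (half_pos hε)] with i hi
  rw [dist_zero_right, norm_norm] at hi ⊢
  have happrox : ‖cfc f (s i) - aeval (s i) q‖ ≤ δ := by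
    have hspec := spectrum_subset_Icc_of_norm_le_one (hs i)
    rw [← cfc_polynomial q (s i) (hsa i), ← cfc_sub f _ (s i) (hf.mono hspec)]
    refine norm_cfc_le hδ.le fun y hy => ?_
    rw [Real.norm_eq_abs, abs_sub_comm]
    exact (hq y (hspec hy)).le
  have hδx : 4 * δ * ‖x‖ + δ = ε := by simp only [δ]; field_simp
  calc ‖cfc f (s i) * x - x * cfc f (s i)‖
      ≤ 2 * ‖cfc f (s i) - aeval (s i) q‖ * ‖x‖ + ‖aeval (s i) q * x - x * aeval (s i) q‖ :=
        norm_mul_sub_mul_le_norm_sub_add _ _ _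
    _ ≤ 2 * δ * ‖x‖ + ‖aeval (s i) q * x - x * aeval (s i) q‖ := by gcongr
    _ < ε := by linarith

noncomputable def sqrtMulOneSub (t : A) : A := cfc (fun y : ℝ => √(y * (1 - y))) t

lemma norm_sqrtMulOneSub_le_one (t : A) : ‖sqrtMulOneSub t‖ ≤ 1 :=
  norm_cfc_le zero_le_one fun y _ => by
    rw [Real.norm_of_nonneg (Real.sqrt_nonneg _), Real.sqrt_le_one]
    nlinarith [sq_nonneg (y - 1 / 2)]

end CStarAlgebra

section Order

variable {A : Type*} [CStarAlgebra A] [PartialOrder A] [StarOrderedRing A]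

lemma IsSelfAdjoint.conj_le_smul_mul_self {s z : A} (hs : IsSelfAdjoint s) {k : ℝ}
    (hz : z ≤ algebraMap ℝ A k) : s * z * s ≤ k • (s * s) := by
  have h := star_left_conjugate_le_conjugate hz s
  rw [hs.star_eq] at h
  rwa [Algebra.smul_def, ← mul_assoc, Algebra.commutes]

lemma mul_star_le_algebraMap_sq {a : A} {M : ℝ} (ha : ‖a‖ ≤ M) :
    a * star a ≤ algebraMap ℝ A (M ^ 2) :=
  CStarAlgebra.mul_star_le_algebraMap_norm_sq.trans
    (algebraMap_mono A (pow_le_pow_left₀ (norm_nonneg a) ha 2))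

lemma mul_star_add_mul_star_le (a c : A) :
    a * star c + c * star a ≤ a * star a + c * star c := by
  have h := mul_star_self_nonneg (a - c)
  rw [← sub_nonneg]
  convert h using 1
  simp only [star_sub]
  noncomm_ring

lemma norm_mul_add_one_sub_mul_sq_le {t r : A} (ht : IsSelfAdjoint t) (hr : IsSelfAdjoint r)
    (hrt : r * r = t * (1 - t)) {a c : A} {M : ℝ} (ha : ‖a‖ ≤ M) (hc : ‖c‖ ≤ M) :
    ‖t * a + (1 - t) * c‖ ^ 2 ≤ M ^ 2 + 2 * ‖(t * (a * star c) - a * star c * t) * (1 - t)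
      - (r * (a * star c) - a * star c * r) * r‖ := by
  set x := t * a + (1 - t) * c
  set w := a * star c
  set E := (t * w - w * t) * (1 - t) - (r * w - w * r) * r
  have hpartition : M ^ 2 • (t * t) + M ^ 2 • ((1 - t) * (1 - t)) + (2 * M ^ 2) • (r * r)
      = algebraMap ℝ A (M ^ 2) := by
    rw [hrt, Algebra.algebraMap_eq_smul_one]
    simp only [mul_sub, sub_mul, one_mul, mul_one]
    module
  have hcross : w + star w ≤ algebraMap ℝ A (2 * M ^ 2) := by
    rw [two_mul, map_add]
    calc w + star w = a * star c + c * star a := by simp [w]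
      _ ≤ a * star a + c * star c := mul_star_add_mul_star_le a c
      _ ≤ _ := add_le_add (mul_star_le_algebraMap_sq ha) (mul_star_le_algebraMap_sq hc)
  have hle : x * star x ≤ algebraMap ℝ A (M ^ 2 + ‖E + star E‖) := by
    rw [mul_add_one_sub_mul_mul_star_eq ht hr hrt a c, map_add, ← hpartition]
    gcongr
    · exact ht.conj_le_smul_mul_self (mul_star_le_algebraMap_sq ha)
    · exact ((IsSelfAdjoint.one A).sub ht).conj_le_smul_mul_self (mul_star_le_algebraMap_sq hc)
    · exact hr.conj_le_smul_mul_self hcross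
    · exact (IsSelfAdjoint.add_star_self E).le_algebraMap_norm_self
  calc ‖x‖ ^ 2 = ‖x * star x‖ := by rw [CStarRing.norm_self_mul_star, sq]
    _ ≤ M ^ 2 + ‖E + star E‖ :=
      (CStarAlgebra.norm_le_iff_le_algebraMap _ (by positivity) (mul_star_self_nonneg x)).2 hle
    _ ≤ M ^ 2 + 2 * ‖E‖ := by
      have := norm_add_le E (star E)
      rw [norm_star] at this
      linarith

lemma sqrtMulOneSub_mul_self {t : A} (ht0 : 0 ≤ t) (ht1 : t ≤ 1) :
    sqrtMulOneSub t * sqrtMulOneSub t = t * (1 - t) := by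
  have hspec : ∀ y ∈ spectrum ℝ t, 0 ≤ y * (1 - y) := fun y hy =>
    mul_nonneg (spectrum_nonneg_of_nonneg ht0 hy)
      (sub_nonneg.2 ((le_algebraMap_iff_spectrum_le (.of_nonneg ht0)).1 (by simpa using ht1) y hy))
  rw [sqrtMulOneSub, ← cfc_mul .., cfc_congr fun y hy => Real.mul_self_sqrt (hspec y hy),
    cfc_mul (fun y => y) (fun y => 1 - y) t, cfc_id' ℝ t, cfc_sub .., cfc_const_one ℝ t,
    cfc_id' ℝ t]

lemma norm_mul_add_one_sub_mul_sq_le_of_nonneg_of_le_one {t : A} (ht0 : 0 ≤ t) (ht1 : t ≤ 1)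
    (a c : A) :
    ‖t * a + (1 - t) * c‖ ^ 2 ≤ max ‖a‖ ‖c‖ ^ 2 + 2 * (‖t * (a * star c) - a * star c * t‖
      + ‖sqrtMulOneSub t * (a * star c) - a * star c * sqrtMulOneSub t‖) := by
  set r := sqrtMulOneSub t
  set w := a * star c
  have h1t : ‖1 - t‖ ≤ 1 :=
    (CStarAlgebra.norm_le_one_iff_of_nonneg _ (sub_nonneg.2 ht1)).2 (sub_le_self _ ht0)
  have hE : ‖(t * w - w * t) * (1 - t) - (r * w - w * r) * r‖
      ≤ ‖t * w - w * t‖ + ‖r * w - w * r‖ :=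
    (norm_sub_le _ _).trans <| add_le_add
      ((norm_mul_le _ _).trans (mul_le_of_le_one_right (norm_nonneg _) h1t))
      ((norm_mul_le _ _).trans
        (mul_le_of_le_one_right (norm_nonneg _) (norm_sqrtMulOneSub_le_one t)))
  have := norm_mul_add_one_sub_mul_sq_le (r := r) (.of_nonneg ht0) IsSelfAdjoint.cfc
    (sqrtMulOneSub_mul_self ht0 ht1) (le_max_left ‖a‖ ‖c‖) (le_max_right _ _)
  linarith

lemma limsup_norm_mul_add_one_sub_mul_le {ι : Type*} {l : Filter ι} [l.NeBot] {e : ι → A}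
    (he_pos : ∀ α, 0 ≤ e α) (he_norm : ∀ α, ‖e α‖ ≤ 1)
    (he_comm : ∀ x : A, Tendsto (fun α => ‖e α * x - x * e α‖) l (𝓝 0))
    (a b y : A) (hy : Tendsto (fun α => ‖e α * y - y‖) l (𝓝 0)) :
    limsup (fun α => ‖e α * a + (1 - e α) * b‖) l ≤ max ‖a‖ ‖b - y‖ := by
  set M := max ‖a‖ ‖b - y‖
  set w := a * star (b - y)
  set err := fun α =>
    2 * (‖e α * w - w * e α‖ + ‖sqrtMulOneSub (e α) * w - w * sqrtMulOneSub (e α)‖)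
  have herr : Tendsto err l (𝓝 0) := by
    have hr := tendsto_norm_cfc_mul_sub_mul_cfc (fun α => .of_nonneg (he_pos α)) he_norm
      (he_comm w) (f := fun y => √(y * (1 - y))) (by fun_prop)
    have := ((he_comm w).add hr).const_mul 2
    rwa [add_zero, mul_zero] at this
  have hbound : ∀ α, ‖e α * a + (1 - e α) * b‖ ≤ √(M ^ 2 + err α) + ‖e α * y - y‖ := fun α =>
    calc ‖e α * a + (1 - e α) * b‖ = ‖(e α * a + (1 - e α) * (b - y)) - (e α * y - y)‖ := by
          congr 1; noncomm_ring
      _ ≤ ‖e α * a + (1 - e α) * (b - y)‖ + ‖e α * y - y‖ := norm_sub_le _ _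
      _ ≤ √(M ^ 2 + err α) + ‖e α * y - y‖ := by
          have he1 : e α ≤ 1 := (CStarAlgebra.norm_le_one_iff_of_nonneg _ (he_pos α)).1 (he_norm α)
          gcongr
          exact Real.le_sqrt_of_sq_le
            (norm_mul_add_one_sub_mul_sq_le_of_nonneg_of_le_one (he_pos α) he1 a (b - y))
  have hlim : Tendsto (fun α => √(M ^ 2 + err α) + ‖e α * y - y‖) l (𝓝 M) := by
    have := ((tendsto_const_nhds (x := M ^ 2)).add herr).sqrt.add hy
    rwa [add_zero, add_zero, Real.sqrt_sq ((norm_nonneg a).trans (le_max_left _ _))] at this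
  exact (limsup_le_limsup (Eventually.of_forall hbound)
    (isCoboundedUnder_le_of_le _ fun _ => norm_nonneg _) hlim.isBoundedUnder_le).trans_eq
    hlim.limsup_eq

end Order

theorem stmt9_general {A : Type*} [CStarAlgebra A] [PartialOrder A] [StarOrderedRing A]
    (I : TwoSidedIdeal A)
    {ι : Type*} [Preorder ι] [Nonempty ι] [IsDirected ι (· ≤ ·)]
    (e : ι → A)
    (he_pos : ∀ α, 0 ≤ e α) (he_norm : ∀ α, ‖e α‖ ≤ 1)
    (he_unit : ∀ b ∈ I, Tendsto (fun α => ‖e α * b - b‖) atTop (nhds 0))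
    (he_comm : ∀ a : A, Tendsto (fun α => ‖e α * a - a * e α‖) atTop (nhds 0))
    (a b : A) :
    limsup (fun α => ‖e α * a + (1 - e α) * b‖) atTop
      ≤ max ‖a‖ (Metric.infDist b (I : Set A)) := by
  set d := Metric.infDist b (I : Set A)
  refine le_of_forall_pos_lt_add fun ε hε => ?_
  obtain ⟨y, hy, hby⟩ := (Metric.infDist_lt_iff ⟨0, I.zero_mem⟩).1 (lt_add_of_pos_right d hε)
  rw [dist_eq_norm] at hby
  calc limsup (fun α => ‖e α * a + (1 - e α) * b‖) atTop ≤ max ‖a‖ ‖b - y‖ :=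
        limsup_norm_mul_add_one_sub_mul_le he_pos he_norm he_comm a b y (he_unit y hy)
    _ < max ‖a‖ d + ε :=
        max_lt (by linarith [le_max_left ‖a‖ d]) (by linarith [le_max_right ‖a‖ d])

/-- If `(e_α)` is a quasi-central approximate unit for a closed two-sided ideal `I` of a
unital C*-algebra `A`, then for all `a b ∈ A`,
`limsup_α ‖e_α a + (1 − e_α) b‖ ≤ max (‖a‖, dist(b, I))`. -/
theorem stmt9 {A : Type*} [CStarAlgebra A] [PartialOrder A] [StarOrderedRing A]
    (I : TwoSidedIdeal A) (hI : IsClosed (I : Set A))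
    {ι : Type*} [Preorder ι] [Nonempty ι] [IsDirected ι (· ≤ ·)]
    (e : ι → A)
    (he_mem : ∀ α, e α ∈ I) (he_pos : ∀ α, 0 ≤ e α) (he_norm : ∀ α, ‖e α‖ ≤ 1)
    (he_unit : ∀ b ∈ I, Tendsto (fun α => ‖e α * b - b‖) atTop (nhds 0))
    (he_comm : ∀ a : A, Tendsto (fun α => ‖e α * a - a * e α‖) atTop (nhds 0))
    (a b : A) :
    limsup (fun α => ‖e α * a + (1 - e α) * b‖) atTop
      ≤ max ‖a‖ (Metric.infDist b (I : Set A)) :=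
  stmt9_general I e he_pos he_norm he_unit he_comm a b
end

section
/- Let A be a unital C*-algebra, let I be a closed two-sided ideal of A, and let (e_α) be a quasi-central approximate unit for I indexed by a nonempty directed preordered set. Then for every a ∈ A, the net ‖a − e_α·a‖ converges to dist(a, I), the distance from a to the set I. -/
open Filter

/-- If `(e_α)` is a quasi-central approximate unit for a closed two-sided ideal `I` of a
unital C*-algebra `A`, then for every `a ∈ A` the net `‖a − e_α a‖` converges to
`dist(a, I)`. -/
theorem stmt10 {A : Type*} [CStarAlgebra A] [PartialOrder A] [StarOrderedRing A]
    (I : TwoSidedIdeal A) (hI : IsClosed (I : Set A))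
    {ι : Type*} [Preorder ι] [Nonempty ι] [IsDirected ι (· ≤ ·)]
    (e : ι → A)
    (he_mem : ∀ α, e α ∈ I) (he_pos : ∀ α, 0 ≤ e α) (he_norm : ∀ α, ‖e α‖ ≤ 1)
    (he_unit : ∀ b ∈ I, Tendsto (fun α => ‖e α * b - b‖) atTop (nhds 0))
    (he_comm : ∀ a : A, Tendsto (fun α => ‖e α * a - a * e α‖) atTop (nhds 0))
    (a : A) :
    Tendsto (fun α => ‖a - e α * a‖) atTop (nhds (Metric.infDist a (I : Set A))) := by
  have hne : ((I : Set A)).Nonempty := ⟨0, I.zero_mem⟩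
  set d := Metric.infDist a (I : Set A) with hd
  -- lower bound: d ≤ ‖a - e α * a‖ since e α * a ∈ I
  have hlow : ∀ α, d ≤ ‖a - e α * a‖ := fun α => by
    have : dist a (e α * a) = ‖a - e α * a‖ := by rw [dist_eq_norm]
    rw [← this]
    exact Metric.infDist_le_dist_of_mem (I.mul_mem_right _ _ (he_mem α))
  -- ‖1 - e α‖ ≤ 1
  have hone : ∀ α, ‖(1 : A) - e α‖ ≤ 1 := fun α => by
    have h1 : e α ≤ 1 := (CStarAlgebra.norm_le_one_iff_of_nonneg (e α) (he_pos α)).1 (he_norm α)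
    have h0 : (0 : A) ≤ 1 - e α := sub_nonneg.2 h1
    rw [CStarAlgebra.norm_le_one_iff_of_nonneg _ h0]
    simpa using he_pos α
  rw [Metric.tendsto_nhds]
  intro ε hε
  obtain ⟨b, hbI, hb⟩ := (Metric.infDist_lt_iff hne).1 (by linarith : d < d + ε / 2)
  have hb' : ‖a - b‖ < d + ε / 2 := by rwa [dist_eq_norm] at hb
  filter_upwards [(he_unit b hbI).eventually (gt_mem_nhds (by linarith : (0:ℝ) < ε / 2))]
    with α hα
  have hub : ‖a - e α * a‖ ≤ ‖a - b‖ + ‖e α * b - b‖ := by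
    have key : a - e α * a = (1 - e α) * (a - b) + (b - e α * b) := by noncomm_ring
    calc ‖a - e α * a‖ = ‖(1 - e α) * (a - b) + (b - e α * b)‖ := by rw [key]
      _ ≤ ‖(1 - e α) * (a - b)‖ + ‖b - e α * b‖ := norm_add_le _ _
      _ ≤ ‖(1 : A) - e α‖ * ‖a - b‖ + ‖b - e α * b‖ := by
          gcongr; exact norm_mul_le _ _
      _ ≤ 1 * ‖a - b‖ + ‖e α * b - b‖ := by
          rw [← norm_neg (b - e α * b)]; simp only [neg_sub]
          gcongr
          exact hone α
      _ = ‖a - b‖ + ‖e α * b - b‖ := by ring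
  have : ‖a - e α * a‖ < d + ε := by linarith
  rw [Real.dist_eq, abs_lt]
  constructor <;> [linarith [hlow α]; linarith]
end

section
/- Let A be a unital C*-algebra, let I be a closed two-sided ideal of A, let (e_α) be a quasi-central approximate unit for I, and let X be a closed ℂ-linear subspace of A. Set Y = X ∩ I. If e_α·x ∈ Y for every x ∈ X and every index α, then for every x ∈ X the distance from x to Y equals the distance from x to I: dist(x, Y) = dist(x, I). (Equivalently, the induced map X/Y → A/I on quotient spaces is isometric.) -/
open Filter

/-- Let `(e_α)` be a quasi-central approximate unit for a closed two-sided ideal `I` of a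
unital C*-algebra `A`, let `X` be a closed subspace of `A` and `Y = X ∩ I`. If
`e_α x ∈ Y` for all `x ∈ X` and all `α`, then `dist(x, Y) = dist(x, I)` for all `x ∈ X`. -/
theorem stmt11 {A : Type*} [CStarAlgebra A] [PartialOrder A] [StarOrderedRing A]
    (I : TwoSidedIdeal A) (hI : IsClosed (I : Set A))
    {ι : Type*} [Preorder ι] [Nonempty ι] [IsDirected ι (· ≤ ·)]
    (e : ι → A)
    (he_mem : ∀ α, e α ∈ I) (he_pos : ∀ α, 0 ≤ e α) (he_norm : ∀ α, ‖e α‖ ≤ 1)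
    (he_unit : ∀ b ∈ I, Tendsto (fun α => ‖e α * b - b‖) atTop (nhds 0))
    (he_comm : ∀ a : A, Tendsto (fun α => ‖e α * a - a * e α‖) atTop (nhds 0))
    (X : Submodule ℂ A) (hX : IsClosed (X : Set A))
    (hmul : ∀ x ∈ X, ∀ α, e α * x ∈ (X : Set A) ∩ (I : Set A)) :
    ∀ x ∈ X, Metric.infDist x ((X : Set A) ∩ (I : Set A))
      = Metric.infDist x (I : Set A) := by
  intro x hx
  obtain ⟨α₀⟩ := ‹Nonempty ι›
  have hYne : ((X : Set A) ∩ (I : Set A)).Nonempty := ⟨_, hmul x hx α₀⟩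
  have hIne : ((I : Set A)).Nonempty := ⟨0, I.zero_mem⟩
  refine le_antisymm (not_lt.mp fun hlt => ?_) (Metric.infDist_le_infDist_of_subset Set.inter_subset_right hYne)
  obtain ⟨b, hb, hdb⟩ := (Metric.infDist_lt_iff hIne).mp hlt
  rw [dist_eq_norm] at hdb
  -- key: for each α, dist x Y ≤ ‖x - e α * x‖ ≤ ‖x - b‖ + ‖e α * b - b‖
  have key : ∀ α, Metric.infDist x ((X : Set A) ∩ (I : Set A))
      ≤ ‖x - b‖ + ‖e α * b - b‖ := by
    intro α
    have h1 : Metric.infDist x ((X : Set A) ∩ (I : Set A)) ≤ ‖x - e α * x‖ := by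
      simpa [dist_eq_norm] using Metric.infDist_le_dist_of_mem (hmul x hx α)
    refine h1.trans ?_
    have hid : x - e α * x = (1 - e α) * (x - b) + (b - e α * b) := by noncomm_ring
    have hone : ‖(1 : A) - e α‖ ≤ 1 := by
      rw [CStarAlgebra.norm_le_one_iff_of_nonneg _ (by simpa using
        (CStarAlgebra.norm_le_one_iff_of_nonneg _ (he_pos α)).mp (he_norm α))]
      simpa using he_pos α
    calc ‖x - e α * x‖ ≤ ‖(1 - e α) * (x - b)‖ + ‖b - e α * b‖ := by
          rw [hid]; exact norm_add_le _ _
      _ ≤ ‖(1 : A) - e α‖ * ‖x - b‖ + ‖b - e α * b‖ := by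
          gcongr; exact norm_mul_le _ _
      _ ≤ 1 * ‖x - b‖ + ‖b - e α * b‖ := by gcongr
      _ = ‖x - b‖ + ‖e α * b - b‖ := by rw [one_mul, norm_sub_rev b]
  have hlim : Tendsto (fun α => ‖x - b‖ + ‖e α * b - b‖) atTop (nhds (‖x - b‖)) := by
    simpa using (tendsto_const_nhds (x := ‖x - b‖)).add (he_unit b hb)
  exact absurd (ge_of_tendsto hlim (Eventually.of_forall key)) (not_le.mpr hdb)
end

section
/- Let A be a unital C*-algebra, let I be a closed two-sided ideal of A, let (e_α) be a quasi-central approximate unit for I, and let S be a closed ℂ-linear subspace of A with 1 ∈ S and S closed under the star operation. Set J = S ∩ I, and assume that e_α·s ∈ S (hence e_α·s ∈ J) for every s ∈ S and every index α. Then for every self-adjoint s ∈ S the following are equivalent: (i) for every ε > 0 there exists k ∈ J with 0 ≤ ε·1 + s + k; (ii) for every ε > 0 there exists b ∈ I with 0 ≤ ε·1 + s + b. -/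
/-!
Given `0 ≤ ε/2 + s + b` with `b ∈ I`, cut `b` off by compressing with `F = 1 - e_α`, where
`‖e_α b - b‖` is small: `ε + F s F = F (ε/2 + s + b) F + (ε/2)(1 - F²) + (ε/2 - F b F)` is a sum of
positive elements, and `F s F - s = e_α s e_α - e_α s - s e_α` lies in `S ∩ I` because `S` is
stable under star and left multiplication by `e_α`.
-/

open Filter Set

section Compression

lemma one_sub_mul_mul_one_sub_sub {A : Type*} [Ring A] (e s : A) :
    (1 - e) * s * (1 - e) - s = e * s * e - e * s - s * e := by
  noncomm_ring

lemma TwoSidedIdeal.one_sub_mul_mul_one_sub_sub_mem {A : Type*} [Ring A] (I : TwoSidedIdeal A)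
    {e : A} (he : e ∈ I) (s : A) : (1 - e) * s * (1 - e) - s ∈ I := by
  rw [one_sub_mul_mul_one_sub_sub]
  exact I.sub_mem (I.sub_mem (I.mul_mem_right _ _ (I.mul_mem_right _ _ he))
    (I.mul_mem_right _ _ he)) (I.mul_mem_left _ _ he)

variable {R A : Type*} [Ring R] [Ring A] [StarRing A] [Module R A]

lemma Submodule.mul_mem_of_isSelfAdjoint (S : Submodule R A) {e s : A} (he : IsSelfAdjoint e)
    (hstar : ∀ s ∈ S, star s ∈ S) (hmul : ∀ s ∈ S, e * s ∈ S) (hs : s ∈ S) : s * e ∈ S := by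
  simpa [he.star_eq] using hstar _ (hmul _ (hstar s hs))

lemma Submodule.one_sub_mul_mul_one_sub_sub_mem (S : Submodule R A) {e s : A}
    (he : IsSelfAdjoint e) (hstar : ∀ s ∈ S, star s ∈ S) (hmul : ∀ s ∈ S, e * s ∈ S)
    (hs : s ∈ S) : (1 - e) * s * (1 - e) - s ∈ S := by
  have hse : s * e ∈ S := S.mul_mem_of_isSelfAdjoint he hstar hmul hs
  rw [one_sub_mul_mul_one_sub_sub, mul_assoc e s e]
  exact sub_mem (sub_mem (hmul _ hse) (hmul _ hs)) hse

end Compression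

section CStarAlgebra

variable {A : Type*} [CStarAlgebra A] [PartialOrder A] [StarOrderedRing A]

lemma IsSelfAdjoint.le_smul_one_of_norm_le {x : A} (hx : IsSelfAdjoint x) {c : ℝ}
    (hc : ‖x‖ ≤ c) : x ≤ c • (1 : A) := by
  rw [← Algebra.algebraMap_eq_smul_one]
  exact hx.le_algebraMap_norm_self.trans (algebraMap_mono A hc)

lemma one_sub_mem_Icc_zero_one {e : A} (he : e ∈ Icc 0 1) : 1 - e ∈ Icc 0 1 :=
  ⟨sub_nonneg.2 he.2, sub_le_self _ he.1⟩

lemma mul_self_le_one_of_mem_Icc {F : A} (hF : F ∈ Icc 0 1) : F * F ≤ 1 := by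
  have hF_sa : IsSelfAdjoint F := .of_nonneg hF.1
  have hnorm : ‖F‖ ≤ 1 := (CStarAlgebra.mem_Icc_iff_norm_le_one.1 hF).2
  refine (CStarAlgebra.norm_le_one_iff_of_nonneg _ ?_).1 ?_
  · simpa [hF_sa.star_eq] using star_mul_self_nonneg F
  · exact (norm_mul_le F F).trans (by nlinarith [norm_nonneg F])

lemma nonneg_smul_one_add_conj {s b F : A} {δ : ℝ} (hs : IsSelfAdjoint s)
    (hx : 0 ≤ δ • (1 : A) + s + b) (hF : F ∈ Icc 0 1) (hFb : ‖F * b‖ ≤ δ) :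
    0 ≤ (2 * δ) • (1 : A) + F * s * F := by
  have hF_sa : IsSelfAdjoint F := .of_nonneg hF.1
  have hnormF : ‖F‖ ≤ 1 := (CStarAlgebra.mem_Icc_iff_norm_le_one.1 hF).2
  have hδ : 0 ≤ δ := (norm_nonneg _).trans hFb
  have hb_sa : IsSelfAdjoint b := by
    simpa using (IsSelfAdjoint.of_nonneg hx).sub (((IsSelfAdjoint.all δ).smul (.one A)).add hs)
  have hconj : 0 ≤ F * (δ • (1 : A) + s + b) * F := by
    simpa [hF_sa.star_eq] using star_left_conjugate_nonneg hx F
  have hFbF : F * b * F ≤ δ • (1 : A) := by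
    refine IsSelfAdjoint.le_smul_one_of_norm_le ?_ ?_
    · simp only [IsSelfAdjoint, star_mul, hF_sa.star_eq, hb_sa.star_eq, mul_assoc]
    · calc ‖F * b * F‖ ≤ ‖F * b‖ * ‖F‖ := norm_mul_le _ _
        _ ≤ δ := by nlinarith [norm_nonneg (F * b)]
  have key : (2 * δ) • (1 : A) + F * s * F =
      F * (δ • (1 : A) + s + b) * F + δ • (1 - F * F) + (δ • (1 : A) - F * b * F) := by
    simp only [mul_add, add_mul, mul_smul_comm, smul_mul_assoc, mul_one, smul_sub]
    module
  rw [key]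
  exact add_nonneg (add_nonneg hconj (smul_nonneg hδ (sub_nonneg.2 (mul_self_le_one_of_mem_Icc hF))))
    (sub_nonneg.2 hFbF)

end CStarAlgebra

theorem stmt13_general {A : Type*} [CStarAlgebra A] [PartialOrder A] [StarOrderedRing A]
    (I : TwoSidedIdeal A)
    {ι : Type*} [Preorder ι] [Nonempty ι] [IsDirected ι (· ≤ ·)]
    (e : ι → A)
    (he_mem : ∀ α, e α ∈ I) (he_pos : ∀ α, 0 ≤ e α) (he_norm : ∀ α, ‖e α‖ ≤ 1)
    (he_unit : ∀ b ∈ I, Tendsto (fun α => ‖e α * b - b‖) atTop (nhds 0))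
    (S : Submodule ℂ A)
    (hstar : ∀ s ∈ S, star s ∈ S)
    (hmul : ∀ s ∈ S, ∀ α, e α * s ∈ S) :
    ∀ s ∈ S, IsSelfAdjoint s →
      ((∀ ε : ℝ, 0 < ε → ∃ k ∈ (S : Set A) ∩ (I : Set A), 0 ≤ ε • (1 : A) + s + k) ↔
        (∀ ε : ℝ, 0 < ε → ∃ b ∈ I, 0 ≤ ε • (1 : A) + s + b)) := by
  intro s hsS hs
  refine ⟨fun h ε hε => ?_, fun h ε hε => ?_⟩
  · obtain ⟨k, ⟨-, hkI⟩, hk⟩ := h ε hε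
    exact ⟨k, hkI, hk⟩
  obtain ⟨b, hbI, hb⟩ := h (ε / 2) (by positivity)
  obtain ⟨α, hα⟩ := ((he_unit b hbI).eventually (ge_mem_nhds (half_pos hε))).exists
  have he : e α ∈ Icc 0 1 := CStarAlgebra.mem_Icc_iff_norm_le_one.2 ⟨he_pos α, he_norm α⟩
  refine ⟨(1 - e α) * s * (1 - e α) - s,
    ⟨S.one_sub_mul_mul_one_sub_sub_mem (.of_nonneg (he_pos α)) hstar (hmul · · α) hsS,
      I.one_sub_mul_mul_one_sub_sub_mem (he_mem α) s⟩, ?_⟩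
  have hFb : ‖(1 - e α) * b‖ ≤ ε / 2 := by
    rwa [sub_mul, one_mul, ← norm_neg, neg_sub]
  simpa [mul_div_cancel₀ ε two_ne_zero] using
    nonneg_smul_one_add_conj hs hb (one_sub_mem_Icc_zero_one he) hFb

/-- Let `(e_α)` be a quasi-central approximate unit for a closed two-sided ideal `I` of a
unital C*-algebra `A`, and let `S` be a closed unital self-adjoint subspace (operator
system) of `A` with `e_α s ∈ S` for all `s ∈ S` and all `α`. Set `J = S ∩ I`. Then for
every self-adjoint `s ∈ S`:
`(∀ ε > 0, ∃ k ∈ J, 0 ≤ ε•1 + s + k) ↔ (∀ ε > 0, ∃ b ∈ I, 0 ≤ ε•1 + s + b)`. -/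
theorem stmt13 {A : Type*} [CStarAlgebra A] [PartialOrder A] [StarOrderedRing A]
    (I : TwoSidedIdeal A) (hI : IsClosed (I : Set A))
    {ι : Type*} [Preorder ι] [Nonempty ι] [IsDirected ι (· ≤ ·)]
    (e : ι → A)
    (he_mem : ∀ α, e α ∈ I) (he_pos : ∀ α, 0 ≤ e α) (he_norm : ∀ α, ‖e α‖ ≤ 1)
    (he_unit : ∀ b ∈ I, Tendsto (fun α => ‖e α * b - b‖) atTop (nhds 0))
    (he_comm : ∀ a : A, Tendsto (fun α => ‖e α * a - a * e α‖) atTop (nhds 0))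
    (S : Submodule ℂ A) (hS : IsClosed (S : Set A))
    (hone : (1 : A) ∈ S) (hstar : ∀ s ∈ S, star s ∈ S)
    (hmul : ∀ s ∈ S, ∀ α, e α * s ∈ S) :
    ∀ s ∈ S, IsSelfAdjoint s →
      ((∀ ε : ℝ, 0 < ε → ∃ k ∈ (S : Set A) ∩ (I : Set A), 0 ≤ ε • (1 : A) + s + k) ↔
        (∀ ε : ℝ, 0 < ε → ∃ b ∈ I, 0 ≤ ε • (1 : A) + s + b)) :=
  stmt13_general I e he_mem he_pos he_norm he_unit S hstar hmul
end
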